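/- For every positive integer n, the reduced abelian complexity of the regular paperfolding sequence satisfies: ρ_f^{ab,red}(n) = 3 if n is even, ρ_f^{ab,red}(n) = 4 if n > 1 and n ≡ 1 (mod 4), and ρ_f^{ab,red}(n) = 5 if n ≡ 3 (mod 4). -/

import Mathlib

/-- The reduction of a word: replace each maximal run of identical characters
by a single character. -/
def red {α : Type*} [DecidableEq α] (w : List α) : List α :=
  w.destutter (· ≠ ·)

/-- The length-`k` factor of the infinite sequence `x` (1-indexed) starting at
position `i`. -/
def factorAt {α : Type*} (x : ℕ → α) (i k : ℕ) : List α :=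
  (List.range k).map (fun j => x (i + j))

/-- The reduced factor complexity: the number of length-`n` factors of `x`,
counted up to reduced-equivalence (`red v = red w`). -/
noncomputable def redFactorComplexity {α : Type*} [DecidableEq α]
    (x : ℕ → α) (n : ℕ) : ℕ :=
  Set.ncard { u : List α | ∃ i ≥ 1, u = red (factorAt x i n) }

/-- The Thue–Morse sequence (1-indexed): `t n` is the parity of the number of
1's in the binary expansion of `n - 1`. -/
def thueMorse (n : ℕ) : Bool :=
  decide ((Nat.digits 2 (n - 1)).sum % 2 = 1)

/-- The number of alternations (occurrences of 01 or 10) in a binary word. -/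
def alt (w : List Bool) : ℕ :=
  (List.zipWith (fun a b => a != b) w w.tail).count true

/-- The minimum number of alternations among length-`k` factors of Thue–Morse. -/
noncomputable def tmAltMin (k : ℕ) : ℕ :=
  sInf { a : ℕ | ∃ i ≥ 1, a = alt (factorAt thueMorse i k) }

/-- The maximum number of alternations among length-`k` factors of Thue–Morse. -/
noncomputable def tmAltMax (k : ℕ) : ℕ :=
  sSup { a : ℕ | ∃ i ≥ 1, a = alt (factorAt thueMorse i k) }

/-- The Thue–Morse morphism `0 → 01`, `1 → 10`. -/
def mu (w : List Bool) : List Bool :=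
  w.flatMap (fun b => if b then [true, false] else [false, true])

/-- The regular paperfolding sequence (1-indexed): writing `n = n' * 2^k` with
`n'` odd, `f n = 1` iff `n' ≡ 3 (mod 4)`. -/
def paperfold (n : ℕ) : Bool :=
  decide ((n / 2 ^ (n.factorization 2)) % 4 = 3)

/-- The reduced abelian complexity: the number of length-`n` factors of `x`,
counted up to the equivalence identifying `v` and `w` whenever `red v` is a
rearrangement of the characters of `red w`. -/
noncomputable def redAbelianComplexity {α : Type*} [DecidableEq α]
    (x : ℕ → α) (n : ℕ) : ℕ :=
  Set.ncard { m : Multiset α | ∃ i ≥ 1, m = ↑(red (factorAt x i n)) }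

/-!
The reduction of a binary word is the alternating word that starts with the same letter and has
one letter more than there are letter changes; its multiset therefore depends only on that length
`r` and, when `r` is odd, on the first letter. In the paperfolding sequence `f` the odd positions
alternate `0, 1, 0, 1, …`, so among the positions `2m - 1, 2m, 2m + 1` there is exactly one
change. A factor of length `2k + 2` therefore has reduced length `k + 1` or `k + 2`, and one of
length `2k + 1` has reduced length `k`, `k + 1` or `k + 2`, the deviations being governed by the
changes at the two ends of the factor. The relation `f (2m) = f m` lets one find, for every
admissible length and first letter, a factor realising it. Counting one class for each even
length and two for each odd one gives `3`, `4` (`k` even) and `5` (`k` odd).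
-/

theorem red_cons_cons {α : Type*} [DecidableEq α] (a b : α) (w : List α) :
    red (a :: b :: w) = if a = b then red (b :: w) else a :: red (b :: w) := by
  by_cases h : a = b
  · subst h; simp [red, List.destutter_cons']
  · simp [red, List.destutter_cons', h]

theorem factorAt_succ {α : Type*} (x : ℕ → α) (i L : ℕ) :
    factorAt x i (L + 1) = x i :: factorAt x (i + 1) L := by
  simp only [factorAt, List.range_succ_eq_map, List.map_cons, List.map_map, Nat.add_zero]
  congr 1
  exact List.map_congr_left fun j _ => congrArg x (by omega)

/-- The multiset of letters of the alternating word of length `r` starting with `b`. -/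
def altMultiset (b : Bool) (r : ℕ) : Multiset Bool :=
  Multiset.replicate ((r + 1) / 2) b + Multiset.replicate (r / 2) (!b)

theorem altMultiset_succ (b : Bool) (r : ℕ) :
    altMultiset b (r + 1) = b ::ₘ altMultiset (!b) r := by
  ext a
  cases a <;> cases b <;> simp [altMultiset, Multiset.count_replicate] <;> omega

theorem altMultiset_eq_iff {b b' : Bool} {r r' : ℕ} :
    altMultiset b r = altMultiset b' r' ↔ r = r' ∧ (b = b' ∨ r % 2 = 0) := by
  rw [Multiset.ext]
  cases b <;> cases b' <;>
    simp [altMultiset, Multiset.count_replicate, Bool.forall_bool] <;> omega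

def changeCount (x : ℕ → Bool) (i L : ℕ) : ℕ :=
  ∑ j ∈ Finset.range L, (x (i + j) != x (i + j + 1)).toNat

theorem changeCount_add (x : ℕ → Bool) (i L M : ℕ) :
    changeCount x i (L + M) = changeCount x i L + changeCount x (i + L) M := by
  simp only [changeCount, Finset.sum_range_add, add_assoc]

theorem changeCount_one (x : ℕ → Bool) (p : ℕ) :
    changeCount x p 1 = (x p != x (p + 1)).toNat := by
  simp [changeCount]

theorem changeCount_succ (x : ℕ → Bool) (i L : ℕ) :
    changeCount x i (L + 1) = (x i != x (i + 1)).toNat + changeCount x (i + 1) L := by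
  rw [add_comm L, changeCount_add]
  simp [changeCount]

theorem coe_red_factorAt (x : ℕ → Bool) (i L : ℕ) :
    (red (factorAt x i (L + 1)) : Multiset Bool) =
      altMultiset (x i) (changeCount x i L + 1) := by
  induction L generalizing i with
  | zero => simp [factorAt, red, altMultiset, changeCount]
  | succ L ih =>
    rw [factorAt_succ, factorAt_succ (i := i + 1), red_cons_cons, ← factorAt_succ,
      changeCount_succ]
    by_cases h : x i = x (i + 1)
    · simp [h, ih]
    · have hswap : x (i + 1) = !x i := by cases hx : x i <;> simp_all
      have hone : (x i != x (i + 1)).toNat = 1 := by simp [h]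
      rw [hone, if_neg h, ← Multiset.cons_coe, ih, hswap, ← altMultiset_succ, add_comm 1]

def altClasses (R : Finset ℕ) : Finset (Multiset Bool) :=
  R.biUnion fun r => {altMultiset false r, altMultiset true r}

theorem mem_altClasses {R : Finset ℕ} {m : Multiset Bool} :
    m ∈ altClasses R ↔ ∃ r ∈ R, ∃ b, m = altMultiset b r := by
  simp [altClasses, Bool.exists_bool]

theorem card_altClasses (R : Finset ℕ) :
    (altClasses R).card = ∑ r ∈ R, if r % 2 = 0 then 1 else 2 := by
  rw [altClasses, Finset.card_biUnion]
  · refine Finset.sum_congr rfl fun r _ => ?_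
    split_ifs with hr
    · rw [altMultiset_eq_iff.mpr ⟨rfl, Or.inr hr⟩, Finset.pair_eq_singleton,
        Finset.card_singleton]
    · exact Finset.card_pair (by simp [altMultiset_eq_iff, hr])
  · intro r _ r' _ hne
    simp [Function.onFun, altMultiset_eq_iff, Ne.symm hne]

def redAbelianClasses {α : Type*} [DecidableEq α] (x : ℕ → α) (n : ℕ) : Set (Multiset α) :=
  {m | ∃ i ≥ 1, m = ↑(red (factorAt x i n))}

theorem redAbelianComplexity_eq_ncard {α : Type*} [DecidableEq α] (x : ℕ → α) (n : ℕ) :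
    redAbelianComplexity x n = (redAbelianClasses x n).ncard :=
  rfl

theorem redAbelianClasses_succ (x : ℕ → Bool) (L : ℕ) :
    redAbelianClasses x (L + 1) =
      {m | ∃ i ≥ 1, m = altMultiset (x i) (changeCount x i L + 1)} := by
  simp only [redAbelianClasses, coe_red_factorAt]

theorem paperfold_of_odd {m : ℕ} (hm : m % 2 = 1) : paperfold m = decide (m % 4 = 3) := by
  rw [paperfold, Nat.factorization_eq_zero_of_not_dvd (by omega)]
  simp

theorem paperfold_eq_of_mod_four {m : ℕ} (b : Bool) (h : m % 4 = 2 * b.toNat + 1) :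
    paperfold m = b := by
  rw [paperfold_of_odd (by omega)]
  cases b <;> simp_all

theorem paperfold_one : paperfold 1 = false := paperfold_of_odd rfl

theorem paperfold_three : paperfold 3 = true := paperfold_of_odd rfl

theorem paperfold_two_mul {m : ℕ} (hm : m ≠ 0) : paperfold (2 * m) = paperfold m := by
  have hfac : (2 * m).factorization 2 = m.factorization 2 + 1 := by
    rw [Nat.factorization_mul two_ne_zero hm, Finsupp.add_apply, Nat.Prime.factorization_self
      Nat.prime_two, add_comm]
  rw [paperfold, paperfold, hfac, pow_succ', ← Nat.div_div_eq_div_mul,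
    Nat.mul_div_cancel_left _ two_pos]

theorem paperfold_add_two_of_odd {m : ℕ} (hm : m % 2 = 1) :
    paperfold (m + 2) = !paperfold m := by
  rw [paperfold_of_odd hm, paperfold_of_odd (by omega)]
  by_cases h : m % 4 = 3 <;> simp [h] <;> omega

theorem exists_paperfold_add_two_mul (c : ℕ) (b : Bool) : ∃ t, paperfold (c + 2 * t) = b := by
  have of_odd : ∀ m, m % 2 = 1 → ∃ t, paperfold (m + 2 * t) = b := by
    intro m hm
    by_cases h : paperfold m = b
    · exact ⟨0, h⟩
    · exact ⟨1, by rw [mul_one, paperfold_add_two_of_odd hm]; cases b <;> simp_all⟩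
  rcases Nat.even_or_odd' c with ⟨c', rfl | rfl⟩
  · obtain ⟨t, ht⟩ := of_odd (2 * c' + 1) (by omega)
    refine ⟨c' + 1 + 2 * t, ?_⟩
    rw [show 2 * c' + 2 * (c' + 1 + 2 * t) = 2 * (2 * c' + 1 + 2 * t) by ring,
      paperfold_two_mul (by omega), ht]
  · exact of_odd _ (by omega)

theorem exists_paperfold_ne_add {d : ℕ} (hd : d ≠ 0) (b : Bool) :
    ∃ u ≠ 0, paperfold u = b ∧ paperfold (u + d) = !b := by
  induction d using Nat.strong_induction_on with
  | _ d ih =>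
    rcases Nat.even_or_odd' d with ⟨d', rfl | rfl⟩
    · obtain ⟨u, hu, hub, hud⟩ := ih d' (by omega) (by omega)
      refine ⟨2 * u, by omega, by rwa [paperfold_two_mul hu], ?_⟩
      rwa [← mul_add, paperfold_two_mul (by omega)]
    · -- with `u = 2 w` and `w ≡ d' + [!b] (mod 2)` we get `u + d ≡ 2 [!b] + 1 (mod 4)`
      obtain ⟨t, ht⟩ := exists_paperfold_add_two_mul (d' + (!b).toNat + 2) b
      have := (!b).toNat_le
      refine ⟨2 * (d' + (!b).toNat + 2 + 2 * t), by omega,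
        by rwa [paperfold_two_mul (by omega)], paperfold_eq_of_mod_four _ (by omega)⟩

theorem changeCount_paperfold_odd_two (m : ℕ) : changeCount paperfold (2 * m + 1) 2 = 1 := by
  rw [changeCount_succ, changeCount_one, show 2 * m + 1 + 1 + 1 = 2 * m + 1 + 2 by ring,
    paperfold_add_two_of_odd (m := 2 * m + 1) (by omega)]
  cases paperfold (2 * m + 1) <;> cases paperfold (2 * m + 1 + 1) <;> rfl

theorem changeCount_paperfold_odd_even (a k : ℕ) :
    changeCount paperfold (2 * a + 1) (2 * k) = k := by
  induction k with
  | zero => rfl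
  | succ k ih =>
    rw [mul_add, mul_one, changeCount_add, ih, show 2 * a + 1 + 2 * k = 2 * (a + k) + 1 by ring,
      changeCount_paperfold_odd_two]

def oddSwitch (s : ℕ) : Bool := paperfold (2 * s - 1) != paperfold (2 * s)

theorem oddSwitch_of_odd {s : ℕ} (hs : s % 2 = 1) : oddSwitch s = paperfold s := by
  rw [oddSwitch, paperfold_two_mul (by omega), paperfold_of_odd (m := 2 * s - 1) (by omega),
    decide_eq_false (by omega), Bool.false_bne]

theorem oddSwitch_two_mul {u : ℕ} (hu : u ≠ 0) : oddSwitch (2 * u) = !paperfold u := by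
  rw [oddSwitch, paperfold_two_mul (by omega), paperfold_two_mul hu,
    paperfold_of_odd (m := 2 * (2 * u) - 1) (by omega), decide_eq_true (by omega), Bool.true_bne]

theorem changeCount_paperfold_two_mul_sub_one {s : ℕ} (hs : s ≠ 0) (L : ℕ) :
    changeCount paperfold (2 * s - 1) (1 + L) =
      (oddSwitch s).toNat + changeCount paperfold (2 * s) L := by
  rw [changeCount_add, changeCount_one, oddSwitch, show 2 * s - 1 + 1 = 2 * s by omega]

theorem changeCount_paperfold_odd_odd (a k : ℕ) :
    changeCount paperfold (2 * a + 1) (2 * k + 1) = k + (oddSwitch (a + k + 1)).toNat := by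
  rw [changeCount_add, changeCount_paperfold_odd_even, changeCount_one, oddSwitch,
    show 2 * (a + k + 1) - 1 = 2 * a + 1 + 2 * k by omega,
    show 2 * (a + k + 1) = 2 * a + 1 + 2 * k + 1 by ring]

theorem changeCount_paperfold_even_odd {s : ℕ} (hs : s ≠ 0) (k : ℕ) :
    changeCount paperfold (2 * s) (2 * k + 1) + (oddSwitch s).toNat = k + 1 := by
  have h := changeCount_paperfold_odd_even (s - 1) (k + 1)
  rw [show 2 * (s - 1) + 1 = 2 * s - 1 by omega, show 2 * (k + 1) = 1 + (2 * k + 1) by ring,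
    changeCount_paperfold_two_mul_sub_one hs] at h
  omega

theorem changeCount_paperfold_even_even {s : ℕ} (hs : s ≠ 0) (k : ℕ) :
    changeCount paperfold (2 * s) (2 * k) + (oddSwitch s).toNat =
      k + (oddSwitch (s + k)).toNat := by
  have h := changeCount_paperfold_odd_odd (s - 1) k
  rw [show 2 * (s - 1) + 1 = 2 * s - 1 by omega, show 2 * k + 1 = 1 + 2 * k by ring,
    changeCount_paperfold_two_mul_sub_one hs, show s - 1 + k + 1 = s + k by omega] at h
  omega

theorem exists_paperfold_oddSwitch_not_add {k : ℕ} (hk : k ≠ 0) (b : Bool) :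
    ∃ s ≠ 0, paperfold s = b ∧ oddSwitch s = !b ∧ oddSwitch (s + k) = b := by
  rcases Nat.even_or_odd' k with ⟨d, rfl | rfl⟩
  · obtain ⟨u, hu, hub, hud⟩ := exists_paperfold_ne_add (d := d) (by omega) b
    refine ⟨2 * u, by omega, by rw [paperfold_two_mul hu, hub],
      by rw [oddSwitch_two_mul hu, hub], ?_⟩
    rw [← mul_add, oddSwitch_two_mul (by omega), hud, Bool.not_not]
  · -- `s = 2 u` with `u ≡ d + b (mod 2)`, so that `s + k ≡ 2 b + 1 (mod 4)`
    obtain ⟨t, ht⟩ := exists_paperfold_add_two_mul (d + b.toNat + 2) b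
    have := b.toNat_le
    refine ⟨2 * (d + b.toNat + 2 + 2 * t), by omega, by rw [paperfold_two_mul (by omega), ht],
      by rw [oddSwitch_two_mul (by omega), ht], ?_⟩
    rw [oddSwitch_of_odd (by omega), paperfold_eq_of_mod_four b (by omega)]

theorem exists_paperfold_oddSwitch_add_not {k : ℕ} (hk : k % 2 = 1) (b : Bool) :
    ∃ s ≠ 0, paperfold s = b ∧ oddSwitch s = b ∧ oddSwitch (s + k) = !b := by
  -- `s ≡ 2 b + 1 (mod 4)` and `s + k = 2 u`
  obtain ⟨t, ht⟩ := exists_paperfold_add_two_mul ((k + 1) / 2 + b.toNat) b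
  have := b.toNat_le
  have hs : (4 * t + 2 * b.toNat + 1) % 4 = 2 * b.toNat + 1 := by omega
  refine ⟨4 * t + 2 * b.toNat + 1, by omega, paperfold_eq_of_mod_four b hs,
    by rw [oddSwitch_of_odd (by omega), paperfold_eq_of_mod_four b hs], ?_⟩
  rw [show 4 * t + 2 * b.toNat + 1 + k = 2 * ((k + 1) / 2 + b.toNat + 2 * t) by omega,
    oddSwitch_two_mul (by omega), ht]

theorem redAbelianClasses_paperfold_even (k : ℕ) :
    redAbelianClasses paperfold (2 * k + 2) = altClasses {k + 1, k + 2} := by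
  have window (s : ℕ) (hs : s ≠ 0) :
      ∃ i ≥ 1, altMultiset (paperfold s) (k + 2 - (oddSwitch s).toNat) =
        altMultiset (paperfold i) (changeCount paperfold i (2 * k + 1) + 1) := by
    refine ⟨2 * s, by omega, ?_⟩
    rw [paperfold_two_mul hs]
    congr 1
    have := changeCount_paperfold_even_odd hs k
    omega
  have hf2 : paperfold 2 = false := (paperfold_two_mul one_ne_zero).trans paperfold_one
  have hf6 : paperfold 6 = true := (paperfold_two_mul three_ne_zero).trans paperfold_three
  have hg1 : oddSwitch 1 = false := (oddSwitch_of_odd rfl).trans paperfold_one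
  have hg3 : oddSwitch 3 = true := (oddSwitch_of_odd rfl).trans paperfold_three
  have hg2 : oddSwitch 2 = true := by simpa [paperfold_one] using oddSwitch_two_mul one_ne_zero
  have hg6 : oddSwitch 6 = false := by
    simpa [paperfold_three] using oddSwitch_two_mul three_ne_zero
  rw [redAbelianClasses_succ]
  ext m
  simp only [Set.mem_ofPred_eq, Finset.mem_coe, mem_altClasses, Finset.mem_insert,
    Finset.mem_singleton]
  constructor
  · rintro ⟨i, hi, rfl⟩
    refine ⟨_, ?_, _, rfl⟩
    rcases Nat.even_or_odd' i with ⟨s, rfl | rfl⟩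
    · have := changeCount_paperfold_even_odd (s := s) (by omega) k
      have := Bool.toNat_le (oddSwitch s)
      omega
    · have := changeCount_paperfold_odd_odd s k
      have := Bool.toNat_le (oddSwitch (s + k + 1))
      omega
  · rintro ⟨r, hr, b, rfl⟩
    rcases hr with rfl | rfl <;> cases b
    · simpa [hf2, hg2] using window 2 two_ne_zero
    · simpa [paperfold_three, hg3] using window 3 three_ne_zero
    · simpa [paperfold_one, hg1] using window 1 one_ne_zero
    · simpa [hf6, hg6] using window 6 (by norm_num)

theorem redAbelianClasses_paperfold_odd {k : ℕ} (hk : k ≠ 0) :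
    redAbelianClasses paperfold (2 * k + 1) = altClasses {k, k + 1, k + 2} := by
  have window (s : ℕ) (hs : s ≠ 0) (r : ℕ)
      (hr : r + (oddSwitch s).toNat = k + 1 + (oddSwitch (s + k)).toNat) :
      ∃ i ≥ 1, altMultiset (paperfold s) r =
        altMultiset (paperfold i) (changeCount paperfold i (2 * k) + 1) := by
    refine ⟨2 * s, by omega, ?_⟩
    rw [paperfold_two_mul hs]
    congr 1
    have := changeCount_paperfold_even_even hs k
    omega
  have odd_window (a : ℕ) : altMultiset (paperfold (2 * a + 1)) (k + 1) =
      altMultiset (paperfold (2 * a + 1)) (changeCount paperfold (2 * a + 1) (2 * k) + 1) := by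
    rw [changeCount_paperfold_odd_even]
  have from_not_add (b : Bool) : ∃ i ≥ 1, altMultiset b (k + 2 * b.toNat) =
      altMultiset (paperfold i) (changeCount paperfold i (2 * k) + 1) := by
    obtain ⟨s, hs, hf, hg, hg'⟩ := exists_paperfold_oddSwitch_not_add hk b
    simpa [hf] using window s hs (k + 2 * b.toNat) (by rw [hg, hg']; cases b <;> simp)
  have from_add_not (hko : k % 2 = 1) (b : Bool) : ∃ i ≥ 1, altMultiset b (k + 2 * (!b).toNat) =
      altMultiset (paperfold i) (changeCount paperfold i (2 * k) + 1) := by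
    obtain ⟨s, hs, hf, hg, hg'⟩ := exists_paperfold_oddSwitch_add_not hko b
    simpa [hf] using window s hs (k + 2 * (!b).toNat) (by rw [hg, hg']; cases b <;> simp)
  rw [redAbelianClasses_succ]
  ext m
  simp only [Set.mem_ofPred_eq, Finset.mem_coe, mem_altClasses, Finset.mem_insert,
    Finset.mem_singleton]
  constructor
  · rintro ⟨i, hi, rfl⟩
    refine ⟨_, ?_, _, rfl⟩
    rcases Nat.even_or_odd' i with ⟨s, rfl | rfl⟩
    · have := changeCount_paperfold_even_even (s := s) (by omega) k
      have := Bool.toNat_le (oddSwitch s)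
      have := Bool.toNat_le (oddSwitch (s + k))
      omega
    · have := changeCount_paperfold_odd_even s k
      omega
  · rintro ⟨r, hr, b, rfl⟩
    rcases hr with hr | hr | hr <;> rw [hr]
    · rcases Nat.mod_two_eq_zero_or_one k with hke | hko
      · simpa [altMultiset_eq_iff, hke] using from_not_add false
      · cases b
        · simpa using from_not_add false
        · simpa using from_add_not hko true
    · cases b
      · exact ⟨1, le_rfl, by simpa [paperfold_one] using odd_window 0⟩
      · exact ⟨3, by norm_num, by simpa [paperfold_three] using odd_window 1⟩
    · rcases Nat.mod_two_eq_zero_or_one k with hke | hko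
      · simpa [altMultiset_eq_iff, hke] using from_not_add true
      · cases b
        · simpa using from_add_not hko false
        · simpa using from_not_add true

theorem redAbelianComplexity_paperfold_even (k : ℕ) :
    redAbelianComplexity paperfold (2 * k + 2) = 3 := by
  rw [redAbelianComplexity_eq_ncard, redAbelianClasses_paperfold_even, Set.ncard_coe_finset,
    card_altClasses, Finset.sum_pair (by omega)]
  split_ifs <;> omega

theorem redAbelianComplexity_paperfold_odd {k : ℕ} (hk : k ≠ 0) :
    redAbelianComplexity paperfold (2 * k + 1) = if k % 2 = 0 then 4 else 5 := by
  rw [redAbelianComplexity_eq_ncard, redAbelianClasses_paperfold_odd hk, Set.ncard_coe_finset,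
    card_altClasses, Finset.sum_insert (by simp), Finset.sum_pair (by omega)]
  split_ifs <;> omega

theorem stmt18 (n : ℕ) (hn : 1 ≤ n) :
    (Even n → redAbelianComplexity paperfold n = 3) ∧
    (1 < n → n % 4 = 1 → redAbelianComplexity paperfold n = 4) ∧
    (n % 4 = 3 → redAbelianComplexity paperfold n = 5) := by
  refine ⟨fun ⟨j, hj⟩ => ?_, fun h1 h4 => ?_, fun h4 => ?_⟩
  · obtain rfl : n = 2 * (j - 1) + 2 := by omega
    exact redAbelianComplexity_paperfold_even _
  · rw [show n = 2 * (n / 2) + 1 by omega, redAbelianComplexity_paperfold_odd (by omega),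
      if_pos (by omega)]
  · rw [show n = 2 * (n / 2) + 1 by omega, redAbelianComplexity_paperfold_odd (by omega),
      if_neg (by omega)]
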